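/- Let G⁽¹⁾ and G⁽²⁾ be the two MILP instances of size (8,8) defined in the context. For every MP-GNN F of size (8,8), F(G⁽¹⁾) = F(G⁽²⁾), and moreover all eight entries of F(G⁽¹⁾) are equal to each other. -/
import Mathlib


open scoped BigOperators Classical
open MeasureTheory

noncomputable section

/-- Type of constraint senses: `0` is `≤`, `1` is `=`, `2` is `≥`. -/
abbrev Sense : Type := Fin 3

/-- Extended lower bounds: `Sum.inl a` is a real bound, `Sum.inr ()` is `-∞`. -/
abbrev ExtLo : Type := ℝ ⊕ Unit

/-- Extended upper bounds: `Sum.inl a` is a real bound, `Sum.inr ()` is `+∞`. -/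
abbrev ExtHi : Type := ℝ ⊕ Unit

def senseRel (s : Sense) (a b : ℝ) : Prop :=
  if s = 0 then a ≤ b else if s = 1 then a = b else b ≤ a

def loSat (lo : ExtLo) (x : ℝ) : Prop :=
  match lo with
  | Sum.inl a => a ≤ x
  | Sum.inr _ => True

def hiSat (hi : ExtHi) (x : ℝ) : Prop :=
  match hi with
  | Sum.inl a => x ≤ a
  | Sum.inr _ => True

/-- The space `𝒢_{m,n}` of MILP instances of size `(m,n)`:
`(A, b, c, ∘, l, u, I)`, with `I` encoded as a Boolean indicator vector. -/
abbrev MILP (m n : ℕ) : Type :=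
  (Fin m → Fin n → ℝ) × (Fin m → ℝ) × (Fin n → ℝ) × (Fin m → Sense) ×
  (Fin n → ExtLo) × (Fin n → ExtHi) × (Fin n → Bool)

namespace MILP

variable {m n : ℕ}

def A (G : MILP m n) : Fin m → Fin n → ℝ := G.1
def b (G : MILP m n) : Fin m → ℝ := G.2.1
def c (G : MILP m n) : Fin n → ℝ := G.2.2.1
def sense (G : MILP m n) : Fin m → Sense := G.2.2.2.1
def lo (G : MILP m n) : Fin n → ExtLo := G.2.2.2.2.1
def hi (G : MILP m n) : Fin n → ExtHi := G.2.2.2.2.2.1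
def isInt (G : MILP m n) : Fin n → Bool := G.2.2.2.2.2.2

end MILP

/-- Satisfaction of the linear constraints `(Ax) ∘ b`. -/
def consSat {m n : ℕ} (G : MILP m n) (x : Fin n → ℝ) : Prop :=
  ∀ i, senseRel (MILP.sense G i) (∑ j, MILP.A G i j * x j) (MILP.b G i)

/-- Feasible set of the LP relaxation of `G`. -/
def lpFeasSet {m n : ℕ} (G : MILP m n) : Set (Fin n → ℝ) :=
  {x | consSat G x ∧ ∀ j, loSat (MILP.lo G j) (x j) ∧ hiSat (MILP.hi G j) (x j)}

/-- Feasible set of `LP(G, j, lo', hi')`: the LP relaxation of `G` with the bound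
constraint on variable `j` replaced by `lo' ≤ x_j ≤ hi'`. -/
def feasSetMod {m n : ℕ} (G : MILP m n) (j : Fin n) (lo' : ExtLo) (hi' : ExtHi) :
    Set (Fin n → ℝ) :=
  {x | consSat G x ∧ (∀ j', j' ≠ j → loSat (MILP.lo G j') (x j') ∧ hiSat (MILP.hi G j') (x j'))
      ∧ loSat lo' (x j) ∧ hiSat hi' (x j)}

/-- Optimal value (in `ℝ ∪ {±∞}`) of the LP `min cᵀx` over `S`:
`+∞` if infeasible, `-∞` if unbounded below. -/
def lpVal {n : ℕ} (c : Fin n → ℝ) (S : Set (Fin n → ℝ)) : EReal :=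
  ⨅ x ∈ S, ((∑ j, c j * x j : ℝ) : EReal)

/-- `f*(G)`: optimal value of the LP relaxation of `G`. -/
def fstar {m n : ℕ} (G : MILP m n) : EReal := lpVal (MILP.c G) (lpFeasSet G)

/-- `f*(G, j, lo', hi')`: optimal value of `LP(G, j, lo', hi')`. -/
def lpValMod {m n : ℕ} (G : MILP m n) (j : Fin n) (lo' : ExtLo) (hi' : ExtHi) : EReal :=
  lpVal (MILP.c G) (feasSetMod G j lo' hi')

/-- The Euclidean norm on `ℝⁿ` (as `Fin n → ℝ`). -/
def euclNorm {n : ℕ} (x : Fin n → ℝ) : ℝ := Real.sqrt (∑ j, x j ^ 2)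

/-- The Euclidean distance on `ℝⁿ`. -/
def euclDist {n : ℕ} (x y : Fin n → ℝ) : ℝ := euclNorm (fun j => x j - y j)

/-- `x` is an optimal solution of the LP relaxation of `G`. -/
def IsOptSol {m n : ℕ} (G : MILP m n) (x : Fin n → ℝ) : Prop :=
  x ∈ lpFeasSet G ∧ ((∑ j, MILP.c G j * x j : ℝ) : EReal) = fstar G

/-- `x` is an optimal solution of smallest Euclidean norm of the LP relaxation of `G`. -/
def IsMinNormOpt {m n : ℕ} (G : MILP m n) (x : Fin n → ℝ) : Prop :=
  IsOptSol G x ∧ ∀ y, IsOptSol G y → euclNorm x ≤ euclNorm y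

/-- `x*(G)`: the optimal solution of smallest Euclidean norm of the LP relaxation
(defaults to `0` when it does not exist). -/
def xstar {m n : ℕ} (G : MILP m n) : Fin n → ℝ :=
  if h : ∃ x, IsMinNormOpt G x then h.choose else 0

/-- `f*(G, j, l_j, ⌊x*(G)_j⌋)`. -/
def branchDown {m n : ℕ} (G : MILP m n) (j : Fin n) : EReal :=
  lpValMod G j (MILP.lo G j) (Sum.inl ((⌊xstar G j⌋ : ℤ) : ℝ))

/-- `f*(G, j, ⌈x*(G)_j⌉, u_j)`. -/
def branchUp {m n : ℕ} (G : MILP m n) (j : Fin n) : EReal :=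
  lpValMod G j (Sum.inl ((⌈xstar G j⌉ : ℤ) : ℝ)) (MILP.hi G j)

/-- The strong branching score vector `SB(G) ∈ ℝⁿ`. -/
def SB {m n : ℕ} (G : MILP m n) : Fin n → ℝ := fun j =>
  if MILP.isInt G j then
    ((branchDown G j).toReal - (fstar G).toReal) * ((branchUp G j).toReal - (fstar G).toReal)
  else 0

/-- `SB(G) ∈ ℝⁿ`: the LP relaxation of `G` is feasible and bounded (so that the
min-norm optimal solution `x*(G)` exists and `f*(G)` is finite), and all the
branch LP values entering the strong branching scores are finite. -/
def SBRealValued {m n : ℕ} (G : MILP m n) : Prop :=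
  (∃ x, IsMinNormOpt G x) ∧ fstar G ≠ ⊤ ∧ fstar G ≠ ⊥ ∧
  ∀ j, MILP.isInt G j →
    branchDown G j ≠ ⊤ ∧ branchDown G j ≠ ⊥ ∧ branchUp G j ≠ ⊤ ∧ branchUp G j ≠ ⊥

/-! ### WL colors -/

abbrev VFeat : Type := ℝ × Sense
abbrev WFeat : Type := ℝ × ExtLo × ExtHi × Bool

/-- The pair (type of constraint-node colors, type of variable-node colors) at
each round of the WL test. -/
def WLTypes : ℕ → Type × Type
  | 0 => (VFeat, WFeat)
  | l + 1 =>
      ((WLTypes l).1 × Multiset ((WLTypes l).2 × ℝ),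
       (WLTypes l).2 × Multiset ((WLTypes l).1 × ℝ))

abbrev VColor (l : ℕ) : Type := (WLTypes l).1
abbrev WColor (l : ℕ) : Type := (WLTypes l).2

/-- The canonical WL colors of a MILP instance: `(wl G l).1 i = C_l^V(i)` and
`(wl G l).2 j = C_l^W(j)`. -/
def wl {m n : ℕ} (G : MILP m n) : (l : ℕ) → (Fin m → VColor l) × (Fin n → WColor l)
  | 0 =>
      (fun i => (MILP.b G i, MILP.sense G i),
       fun j => (MILP.c G j, MILP.lo G j, MILP.hi G j, MILP.isInt G j))
  | l + 1 =>
      (fun i => ((wl G l).1 i,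
        (Finset.univ.filter (fun j => MILP.A G i j ≠ 0)).val.map
          (fun j => ((wl G l).2 j, MILP.A G i j))),
       fun j => ((wl G l).2 j,
        (Finset.univ.filter (fun i => MILP.A G i j ≠ 0)).val.map
          (fun i => ((wl G l).1 i, MILP.A G i j))))

/-- `G` is message-passing-tractable: whenever two constraints and two variables are
respectively indistinguishable by all rounds of the WL test, the corresponding matrix
entries agree (i.e. every submatrix of `A` over a pair of classes of the stable WL
partition is constant). -/
def MPTractable {m n : ℕ} (G : MILP m n) : Prop :=
  ∀ i i' j j', (∀ l, (wl G l).1 i = (wl G l).1 i') → (∀ l, (wl G l).2 j = (wl G l).2 j') →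
    MILP.A G i j = MILP.A G i' j'

/-- `G ∼^W G2`. -/
def WLEquivW {m n : ℕ} (G G2 : MILP m n) : Prop :=
  ∀ l, Finset.univ.val.map ((wl G l).1) = Finset.univ.val.map ((wl G2 l).1)
    ∧ ∀ j, (wl G l).2 j = (wl G2 l).2 j

/-! ### MP-GNNs -/

/-- A message-passing GNN of size `(m,n)`. -/
structure MPGNN (m n : ℕ) where
  L : ℕ
  d : ℕ → ℕ
  e : ℕ → ℕ
  p0 : ℝ × Sense → (Fin (d 0) → ℝ)
  q0 : ℝ × ExtLo × ExtHi × Bool → (Fin (d 0) → ℝ)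
  f : (l : ℕ) → (Fin (d l) → ℝ) × ℝ → (Fin (e l) → ℝ)
  g : (l : ℕ) → (Fin (d l) → ℝ) × ℝ → (Fin (e l) → ℝ)
  p : (l : ℕ) → (Fin (d l) → ℝ) × (Fin (e l) → ℝ) → (Fin (d (l + 1)) → ℝ)
  q : (l : ℕ) → (Fin (d l) → ℝ) × (Fin (e l) → ℝ) → (Fin (d (l + 1)) → ℝ)
  r : (Fin (d L) → ℝ) × (Fin (d L) → ℝ) × (Fin (d L) → ℝ) → ℝ
  p0_cont : Continuous p0
  q0_cont : Continuous q0
  f_cont : ∀ l, Continuous (f l)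
  g_cont : ∀ l, Continuous (g l)
  p_cont : ∀ l, Continuous (p l)
  q_cont : ∀ l, Continuous (q l)
  r_cont : Continuous r
  f_zero : ∀ l t, f l (t, 0) = 0
  g_zero : ∀ l s, g l (s, 0) = 0

namespace MPGNN

variable {m n : ℕ}

/-- The features of an MP-GNN on input `G` after `l` layers:
`(st N G l).1 i = s_i^l` and `(st N G l).2 j = t_j^l`. -/
def st (N : MPGNN m n) (G : MILP m n) :
    (l : ℕ) → (Fin m → (Fin (N.d l) → ℝ)) × (Fin n → (Fin (N.d l) → ℝ))
  | 0 =>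
      (fun i => N.p0 (MILP.b G i, MILP.sense G i),
       fun j => N.q0 (MILP.c G j, MILP.lo G j, MILP.hi G j, MILP.isInt G j))
  | l + 1 =>
      (fun i => N.p l ((st N G l).1 i, ∑ j, N.f l ((st N G l).2 j, MILP.A G i j)),
       fun j => N.q l ((st N G l).2 j, ∑ i, N.g l ((st N G l).1 i, MILP.A G i j)))

/-- The output `F(G) ∈ ℝⁿ` of an MP-GNN. -/
def eval (N : MPGNN m n) (G : MILP m n) : Fin n → ℝ := fun j =>
  N.r (∑ i, (st N G N.L).1 i, ∑ j', (st N G N.L).2 j', (st N G N.L).2 j)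

end MPGNN

/-! ### 2-FWL colors -/

/-- The pair (type of `(V,W)`-pair colors, type of `(W,W)`-pair colors) at each
round of the 2-FWL test. -/
def FWLTypes : ℕ → Type × Type
  | 0 => (VFeat × WFeat × ℝ, WFeat × WFeat × Bool)
  | l + 1 =>
      ((FWLTypes l).1 × Multiset ((FWLTypes l).2 × (FWLTypes l).1),
       (FWLTypes l).2 × Multiset ((FWLTypes l).1 × (FWLTypes l).1))

abbrev VWColor (l : ℕ) : Type := (FWLTypes l).1
abbrev WWColor (l : ℕ) : Type := (FWLTypes l).2

/-- The canonical 2-FWL colors of a MILP instance: `(fwl G l).1 i j = C_l^{VW}(i,j)` and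
`(fwl G l).2 j₁ j₂ = C_l^{WW}(j₁,j₂)`. -/
def fwl {m n : ℕ} (G : MILP m n) :
    (l : ℕ) → (Fin m → Fin n → VWColor l) × (Fin n → Fin n → WWColor l)
  | 0 =>
      (fun i j => ((MILP.b G i, MILP.sense G i),
        (MILP.c G j, MILP.lo G j, MILP.hi G j, MILP.isInt G j), MILP.A G i j),
       fun j1 j2 => ((MILP.c G j1, MILP.lo G j1, MILP.hi G j1, MILP.isInt G j1),
        (MILP.c G j2, MILP.lo G j2, MILP.hi G j2, MILP.isInt G j2), decide (j1 = j2)))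
  | l + 1 =>
      (fun i j => ((fwl G l).1 i j,
        Finset.univ.val.map (fun j1 => ((fwl G l).2 j1 j, (fwl G l).1 i j1))),
       fun j1 j2 => ((fwl G l).2 j1 j2,
        Finset.univ.val.map (fun i => ((fwl G l).1 i j2, (fwl G l).1 i j1))))

/-- `G ∼₂ G2`. -/
def FWLEquiv {m n : ℕ} (G G2 : MILP m n) : Prop :=
  ∀ l, (Finset.univ : Finset (Fin m × Fin n)).val.map (fun p => (fwl G l).1 p.1 p.2)
        = (Finset.univ : Finset (Fin m × Fin n)).val.map (fun p => (fwl G2 l).1 p.1 p.2)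
    ∧ (Finset.univ : Finset (Fin n × Fin n)).val.map (fun p => (fwl G l).2 p.1 p.2)
        = (Finset.univ : Finset (Fin n × Fin n)).val.map (fun p => (fwl G2 l).2 p.1 p.2)

/-- `G ∼₂^W G2`. -/
def FWLEquivW {m n : ℕ} (G G2 : MILP m n) : Prop :=
  ∀ l, ∀ j, Finset.univ.val.map (fun i => (fwl G l).1 i j)
        = Finset.univ.val.map (fun i => (fwl G2 l).1 i j)
    ∧ Finset.univ.val.map (fun j1 => (fwl G l).2 j1 j)
        = Finset.univ.val.map (fun j1 => (fwl G2 l).2 j1 j)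

/-! ### 2-FGNNs -/

/-- A second-order folklore GNN of size `(m,n)`. -/
structure FGNN2 (m n : ℕ) where
  L : ℕ
  d : ℕ → ℕ
  e : ℕ → ℕ
  p0 : VFeat × WFeat × ℝ → (Fin (d 0) → ℝ)
  q0 : WFeat × WFeat × Bool → (Fin (d 0) → ℝ)
  f : (l : ℕ) → (Fin (d l) → ℝ) × (Fin (d l) → ℝ) → (Fin (e l) → ℝ)
  g : (l : ℕ) → (Fin (d l) → ℝ) × (Fin (d l) → ℝ) → (Fin (e l) → ℝ)
  p : (l : ℕ) → (Fin (d l) → ℝ) × (Fin (e l) → ℝ) → (Fin (d (l + 1)) → ℝ)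
  q : (l : ℕ) → (Fin (d l) → ℝ) × (Fin (e l) → ℝ) → (Fin (d (l + 1)) → ℝ)
  r : (Fin (d L) → ℝ) × (Fin (d L) → ℝ) → ℝ
  p0_cont : Continuous p0
  q0_cont : Continuous q0
  f_cont : ∀ l, Continuous (f l)
  g_cont : ∀ l, Continuous (g l)
  p_cont : ∀ l, Continuous (p l)
  q_cont : ∀ l, Continuous (q l)
  r_cont : Continuous r

namespace FGNN2

variable {m n : ℕ}

/-- The features of a 2-FGNN on input `G` after `l` layers:
`(st N G l).1 i j = s_{ij}^l` and `(st N G l).2 j₁ j₂ = t_{j₁j₂}^l`. -/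
def st (N : FGNN2 m n) (G : MILP m n) :
    (l : ℕ) → (Fin m → Fin n → (Fin (N.d l) → ℝ)) × (Fin n → Fin n → (Fin (N.d l) → ℝ))
  | 0 =>
      (fun i j => N.p0 ((MILP.b G i, MILP.sense G i),
        (MILP.c G j, MILP.lo G j, MILP.hi G j, MILP.isInt G j), MILP.A G i j),
       fun j1 j2 => N.q0 ((MILP.c G j1, MILP.lo G j1, MILP.hi G j1, MILP.isInt G j1),
        (MILP.c G j2, MILP.lo G j2, MILP.hi G j2, MILP.isInt G j2), decide (j1 = j2)))
  | l + 1 =>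
      (fun i j => N.p l ((st N G l).1 i j, ∑ j1, N.f l ((st N G l).2 j1 j, (st N G l).1 i j1)),
       fun j1 j2 => N.q l ((st N G l).2 j1 j2, ∑ i, N.g l ((st N G l).1 i j2, (st N G l).1 i j1)))

/-- The output `F(G) ∈ ℝⁿ` of a 2-FGNN. -/
def eval (N : FGNN2 m n) (G : MILP m n) : Fin n → ℝ := fun j =>
  N.r (∑ i, (st N G N.L).1 i j, ∑ j1, (st N G N.L).2 j1 j)

end FGNN2


/-! ### The two 8×8 MILP instances from the paper -/

/-- Constraint pairs of the 8-cycle instance (problem (3.1)). -/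
def cycPairs : Fin 8 → Fin 8 × Fin 8 :=
  ![(0,1),(1,2),(2,3),(3,4),(4,5),(5,6),(6,7),(7,0)]

/-- Constraint pairs of the two-triangles-plus-2-cycle instance (problem (3.2)). -/
def triPairs : Fin 8 → Fin 8 × Fin 8 :=
  ![(0,1),(1,2),(2,0),(3,4),(4,5),(5,3),(6,7),(7,6)]

/-- The MILP `min ∑ x_j  s.t.  x_{p₁} + x_{p₂} ≥ 1` for each listed pair,
`0 ≤ x_j ≤ 1`, `x_j ∈ ℤ`. -/
def mkInstance (prs : Fin 8 → Fin 8 × Fin 8) : MILP 8 8 :=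
  (fun i j => if j = (prs i).1 ∨ j = (prs i).2 then 1 else 0,
   fun _ => 1, fun _ => 1, fun _ => (2 : Sense),
   fun _ => Sum.inl 0, fun _ => Sum.inl 1, fun _ => true)

/-- The MILP instance `G⁽¹⁾` of (3.1). -/
def Gcyc : MILP 8 8 := mkInstance cycPairs

/-- The MILP instance `G⁽²⁾` of (3.2). -/
def Gtri : MILP 8 8 := mkInstance triPairs

lemma st_const (F : MPGNN 8 8) : ∀ l, ∃ s t,
    (∀ i, (MPGNN.st F Gcyc l).1 i = s ∧ (MPGNN.st F Gtri l).1 i = s) ∧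
    (∀ j, (MPGNN.st F Gcyc l).2 j = t ∧ (MPGNN.st F Gtri l).2 j = t) := by
  intro l
  induction l with
  | zero =>
    refine ⟨F.p0 (1, (2 : Sense)), F.q0 (1, Sum.inl 0, Sum.inl 1, true), ?_, ?_⟩ <;>
      intro i <;>
      simp [MPGNN.st, Gcyc, Gtri, mkInstance, MILP.b, MILP.sense, MILP.c, MILP.lo,
        MILP.hi, MILP.isInt]
  | succ l ih =>
    obtain ⟨s, t, hs, ht⟩ := ih
    refine ⟨F.p l (s, F.f l (t, 1) + F.f l (t, 1)),
      F.q l (t, F.g l (s, 1) + F.g l (s, 1)), ?_, ?_⟩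
    · intro i
      constructor <;>
      · show F.p l (_, _) = _
        have h2 : ∀ j, (MPGNN.st F Gcyc l).2 j = t := fun j => (ht j).1
        have h3 : ∀ j, (MPGNN.st F Gtri l).2 j = t := fun j => (ht j).2
        simp only [h2, h3, (hs i).1, (hs i).2]
        fin_cases i <;>
          simp (config := { decide := true }) [Fin.sum_univ_eight, Gcyc, Gtri, mkInstance,
            MILP.A, cycPairs, triPairs, F.f_zero]
    · intro j
      constructor <;>
      · show F.q l (_, _) = _
        have h2 : ∀ i, (MPGNN.st F Gcyc l).1 i = s := fun i => (hs i).1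
        have h3 : ∀ i, (MPGNN.st F Gtri l).1 i = s := fun i => (hs i).2
        simp only [h2, h3, (ht j).1, (ht j).2]
        fin_cases j <;>
          simp (config := { decide := true }) [Fin.sum_univ_eight, Gcyc, Gtri, mkInstance,
            MILP.A, cycPairs, triPairs, F.g_zero]

/-- Every MP-GNN outputs the same vector on the two instances (3.1)
and (3.2), and moreover its output entries are all equal to each other. -/
theorem all_MPGNN_agree_and_constant_on_examples :
    ∀ F : MPGNN 8 8,
      MPGNN.eval F Gcyc = MPGNN.eval F Gtri ∧
      ∀ j j' : Fin 8, MPGNN.eval F Gcyc j = MPGNN.eval F Gcyc j' := by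
  intro F
  obtain ⟨s, t, hs, ht⟩ := st_const F F.L
  have h1 : ∀ G : MILP 8 8, (∀ i, (MPGNN.st F G F.L).1 i = s) →
      (∀ j, (MPGNN.st F G F.L).2 j = t) →
      ∀ j, MPGNN.eval F G j = F.r (∑ _i : Fin 8, s, ∑ _j : Fin 8, t, t) := by
    intro G hG1 hG2 j
    simp [MPGNN.eval, hG1, hG2]
  have hc := h1 Gcyc (fun i => (hs i).1) (fun j => (ht j).1)
  have ht' := h1 Gtri (fun i => (hs i).2) (fun j => (ht j).2)
  constructor
  · funext j; rw [hc j, ht' j]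
  · intro j j'; rw [hc j, hc j']
end
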